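/- arXiv:1209.1123 — 2 statements merged into one kernel-verified Lean document; each statement's English description precedes it below -/
import Mathlib

section
/- (Remark 4: invertibility of the feedback transformation.) Let G ∈ F^{m×p} be strictly proper. For every proper K ∈ F^{p×m} (all entries have intDegree ≤ 0), the matrix I + G·K is invertible over F, the matrix h_G(K) := K·(I + G·K)⁻¹ is proper, I − G·h_G(K) is invertible over F, and h_G(K)·(I − G·h_G(K))⁻¹ = K. Consequently, the map K ↦ K·(I+GK)⁻¹ is a bijection of the set of proper matrices in F^{p×m} onto itself, with inverse L ↦ L·(I−GL)⁻¹. -/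
/-!
Proper rational functions form the valuation ring of the place at infinity of `ℝ(λ)`, and the
strictly proper ones its maximal ideal. Over a local ring, `1 + S` with `S` in the maximal ideal
has unit determinant, since it reduces to `1` in the residue field; hence `I + GK` is invertible
already over the ring of proper functions, and `K(I + GK)⁻¹` is proper. The rest is the identity
`I - G·K(I + GK)⁻¹ = (I + GK)⁻¹`, applied to `G` and to `-G`.
-/

open Matrix

noncomputable section

/-- The field of real rational functions. -/
abbrev F : Type := RatFunc ℝ

/-- A rational function is stable (w.r.t. stability region `Ω`) if it is proper and
every complex root of the complexification of its reduced denominator lies in `Ω`. -/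
def StableF (Ω : Set ℂ) (f : F) : Prop :=
  f.intDegree ≤ 0 ∧ ∀ z : ℂ, (f.denom.map (algebraMap ℝ ℂ)).IsRoot z → z ∈ Ω

/-- A matrix over `F` is stable if all its entries are stable. -/
def MatStable (Ω : Set ℂ) {a b : Type} (M : Matrix a b F) : Prop :=
  ∀ i j, StableF Ω (M i j)

/-- A matrix over `F` is strictly proper if every entry is `0` or has negative `intDegree`. -/
def StrictlyProper {a b : Type} (G : Matrix a b F) : Prop :=
  ∀ i j, G i j = 0 ∨ (G i j).intDegree < 0

/-- A matrix over `F` is proper if every entry has nonpositive `intDegree`. -/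
def ProperM {a b : Type} (K : Matrix a b F) : Prop :=
  ∀ i j, (K i j).intDegree ≤ 0

/-- `K` stabilizes `G` if `I + G*K` is invertible and the four closed-loop
transfer matrices are stable. -/
def Stabilizes (Ω : Set ℂ) {m p : ℕ} (G : Matrix (Fin m) (Fin p) F)
    (K : Matrix (Fin p) (Fin m) F) : Prop :=
  IsUnit (1 + G * K).det ∧
    MatStable Ω (1 + G * K)⁻¹ ∧
    MatStable Ω ((1 + G * K)⁻¹ * G) ∧
    MatStable Ω (K * (1 + G * K)⁻¹) ∧
    MatStable Ω (1 + K * G)⁻¹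

/-- A doubly coprime factorization of `G` over `Ω`. -/
structure IsDCF (Ω : Set ℂ) {m p : ℕ} (G : Matrix (Fin m) (Fin p) F)
    (M : Matrix (Fin p) (Fin p) F) (N : Matrix (Fin m) (Fin p) F)
    (Mt : Matrix (Fin m) (Fin m) F) (Nt : Matrix (Fin m) (Fin p) F)
    (X : Matrix (Fin p) (Fin m) F) (Y : Matrix (Fin p) (Fin p) F)
    (Xt : Matrix (Fin p) (Fin m) F) (Yt : Matrix (Fin m) (Fin m) F) : Prop where
  stM : MatStable Ω M
  stN : MatStable Ω N
  stMt : MatStable Ω Mt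
  stNt : MatStable Ω Nt
  stX : MatStable Ω X
  stY : MatStable Ω Y
  stXt : MatStable Ω Xt
  stYt : MatStable Ω Yt
  hM : IsUnit M.det
  hMt : IsUnit Mt.det
  hLeft : G = Mt⁻¹ * Nt
  hRight : G = N * M⁻¹
  bezout : Matrix.fromBlocks Y X (-Nt) Mt * Matrix.fromBlocks M (-Xt) N Yt = 1

/-- A left coprime factorization of `G` over `Ω`. -/
def IsLCF (Ω : Set ℂ) {m p : ℕ} (G : Matrix (Fin m) (Fin p) F)
    (Mt : Matrix (Fin m) (Fin m) F) (Nt : Matrix (Fin m) (Fin p) F) : Prop :=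
  MatStable Ω Mt ∧ MatStable Ω Nt ∧ IsUnit Mt.det ∧ G = Mt⁻¹ * Nt ∧
    ∃ Xt : Matrix (Fin p) (Fin m) F, ∃ Yt : Matrix (Fin m) (Fin m) F,
      MatStable Ω Xt ∧ MatStable Ω Yt ∧ Nt * Xt + Mt * Yt = 1

/-- A right coprime factorization of `G` over `Ω`. -/
def IsRCF (Ω : Set ℂ) {m p : ℕ} (G : Matrix (Fin m) (Fin p) F)
    (N : Matrix (Fin m) (Fin p) F) (M : Matrix (Fin p) (Fin p) F) : Prop :=
  MatStable Ω N ∧ MatStable Ω M ∧ IsUnit M.det ∧ G = N * M⁻¹ ∧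
    ∃ X : Matrix (Fin p) (Fin m) F, ∃ Y : Matrix (Fin p) (Fin p) F,
      MatStable Ω X ∧ MatStable Ω Y ∧ Y * M + X * N = 1

/-- Evaluation of a rational function at a complex point (complexified num/denom). -/
def evalC (z : ℂ) (f : F) : ℂ :=
  (f.num.map (algebraMap ℝ ℂ)).eval z / (f.denom.map (algebraMap ℝ ℂ)).eval z

open IsLocalRing

namespace Matrix

variable {n : Type*} [Fintype n] [DecidableEq n]

theorem isUnit_det_one_add_of_mem_maximalIdeal {R : Type*} [CommRing R] [IsLocalRing R]
    {S : Matrix n n R} (hS : ∀ i j, S i j ∈ maximalIdeal R) : IsUnit (1 + S).det := by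
  have hS0 : S.map (residue R) = 0 := by
    ext i j
    exact (residue_eq_zero_iff _).2 (hS i j)
  rw [← residue_ne_zero_iff_isUnit, RingHom.map_det, map_add, map_one, RingHom.mapMatrix_apply,
    hS0, add_zero, det_one]
  exact one_ne_zero

theorem map_nonsing_inv {R S : Type*} [CommRing R] [CommRing S] (f : R →+* S)
    {M : Matrix n n R} (h : IsUnit M.det) : M⁻¹.map f = (M.map f)⁻¹ :=
  (inv_eq_right_inv <| by
    rw [← Matrix.map_mul, mul_nonsing_inv _ h, Matrix.map_one f (map_zero f) (map_one f)]).symm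

variable {R : Type*} [CommRing R] {m p : Type*} [Fintype m] [DecidableEq m] [Fintype p]
  {G : Matrix m p R} {K : Matrix p m R}

theorem one_sub_mul_mul_inv_one_add_mul (h : IsUnit (1 + G * K).det) :
    1 - G * (K * (1 + G * K)⁻¹) = (1 + G * K)⁻¹ :=
  calc 1 - G * (K * (1 + G * K)⁻¹)
      = (1 + G * K) * (1 + G * K)⁻¹ - G * K * (1 + G * K)⁻¹ := by
        rw [mul_nonsing_inv _ h, Matrix.mul_assoc]
    _ = (1 + G * K)⁻¹ := by rw [← Matrix.sub_mul, add_sub_cancel_right, Matrix.one_mul]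

theorem mul_inv_one_add_mul_mul_inv_one_sub (h : IsUnit (1 + G * K).det) :
    K * (1 + G * K)⁻¹ * (1 - G * (K * (1 + G * K)⁻¹))⁻¹ = K := by
  rw [one_sub_mul_mul_inv_one_add_mul h, nonsing_inv_nonsing_inv _ h, Matrix.mul_assoc,
    nonsing_inv_mul _ h, Matrix.mul_one]

end Matrix

namespace Valuation

variable {K Γ₀ : Type*} [Field K] [LinearOrderedCommGroupWithZero Γ₀] (v : Valuation K Γ₀)
  {m p : Type*} [Fintype m] [DecidableEq m] [Fintype p]

theorem isUnit_det_one_add_mul_and_mul_inv_le_one {G : Matrix m p K} {C : Matrix p m K}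
    (hG : ∀ i j, v (G i j) < 1) (hC : ∀ i j, v (C i j) ≤ 1) :
    IsUnit (1 + G * C).det ∧ ∀ i j, v ((C * (1 + G * C)⁻¹ : Matrix p m K) i j) ≤ 1 := by
  set A := v.valuationSubring
  let G' : Matrix m p A := of fun i j => ⟨G i j, (hG i j).le⟩
  let C' : Matrix p m A := of fun i j => ⟨C i j, hC i j⟩
  have hS : ∀ i j, (G' * C') i j ∈ maximalIdeal A := fun i j =>
    Ideal.sum_mem _ fun k _ => Ideal.mul_mem_right _ _ ((v.mem_maximalIdeal_iff).2 (hG i k))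
  have hunit := isUnit_det_one_add_of_mem_maximalIdeal hS
  have hmap : A.subtype.mapMatrix (1 + G' * C') = 1 + G * C := by
    rw [map_add, map_one, RingHom.mapMatrix_apply, Matrix.map_mul]
    rfl
  refine ⟨?_, fun i j => ?_⟩
  · rw [← hmap, ← RingHom.map_det]
    exact hunit.map _
  · rw [← hmap, RingHom.mapMatrix_apply, ← map_nonsing_inv _ hunit,
      show C = C'.map A.subtype from rfl, ← Matrix.map_mul]
    exact ((C' * (1 + G' * C')⁻¹ : Matrix p m A) i j).2

end Valuation

namespace RatFunc

variable {K : Type*} [Field K] [DecidableEq (RatFunc K)]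

theorem inftyValuation_le_one_iff {f : RatFunc K} :
    inftyValuation K f ≤ 1 ↔ f.intDegree ≤ 0 := by
  rcases eq_or_ne f 0 with rfl | hf
  · simp
  · rw [inftyValuation_apply, inftyValuation_of_nonzero K hf, ← WithZero.exp_zero,
      WithZero.exp_le_exp]

theorem inftyValuation_lt_one_iff {f : RatFunc K} :
    inftyValuation K f < 1 ↔ f = 0 ∨ f.intDegree < 0 := by
  rcases eq_or_ne f 0 with rfl | hf
  · simp
  · rw [inftyValuation_apply, inftyValuation_of_nonzero K hf, ← WithZero.exp_zero,
      WithZero.exp_lt_exp]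
    simp [hf]

end RatFunc

section Proper

variable {m p : Type} {G : Matrix m p F} {K : Matrix p m F}

theorem StrictlyProper.neg (hG : StrictlyProper G) : StrictlyProper (-G) := fun i j => by
  simpa using hG i j

theorem isUnit_det_one_add_mul_and_properM [Fintype m] [DecidableEq m] [Fintype p]
    (hG : StrictlyProper G) (hK : ProperM K) :
    IsUnit (1 + G * K).det ∧ ProperM (K * (1 + G * K)⁻¹) := by
  classical
  simp only [ProperM, ← RatFunc.inftyValuation_le_one_iff] at hK ⊢
  exact (RatFunc.inftyValuation ℝ).isUnit_det_one_add_mul_and_mul_inv_le_one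
    (fun i j => RatFunc.inftyValuation_lt_one_iff.2 (hG i j)) hK

end Proper

/-- **Remark 4.** For a strictly proper plant `G`, the feedback transformation
`h_G(K) = K(I+GK)⁻¹` is well defined and proper for every proper `K`, with
`h_G(K)·(I − G·h_G(K))⁻¹ = K`; consequently `K ↦ K(I+GK)⁻¹` is a bijection of the set of
proper matrices onto itself with inverse `L ↦ L(I−GL)⁻¹`. -/
theorem feedback_transformation_invertible (m p : ℕ)
    (G : Matrix (Fin m) (Fin p) F) (hG : StrictlyProper G) :
    (∀ K : Matrix (Fin p) (Fin m) F, ProperM K →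
      IsUnit (1 + G * K).det ∧
      ProperM (K * (1 + G * K)⁻¹) ∧
      IsUnit (1 - G * (K * (1 + G * K)⁻¹)).det ∧
      (K * (1 + G * K)⁻¹) * (1 - G * (K * (1 + G * K)⁻¹))⁻¹ = K) ∧
    Set.BijOn (fun K : Matrix (Fin p) (Fin m) F => K * (1 + G * K)⁻¹)
      {K | ProperM K} {K | ProperM K} ∧
    Set.InvOn (fun L : Matrix (Fin p) (Fin m) F => L * (1 - G * L)⁻¹)
      (fun K : Matrix (Fin p) (Fin m) F => K * (1 + G * K)⁻¹)
      {K | ProperM K} {K | ProperM K} := by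
  have forward (K : Matrix (Fin p) (Fin m) F) (hK : ProperM K) :=
    isUnit_det_one_add_mul_and_properM hG hK
  have backward (L : Matrix (Fin p) (Fin m) F) (hL : ProperM L) :=
    isUnit_det_one_add_mul_and_properM hG.neg hL
  have hInv : Set.InvOn (fun L : Matrix (Fin p) (Fin m) F => L * (1 - G * L)⁻¹)
      (fun K : Matrix (Fin p) (Fin m) F => K * (1 + G * K)⁻¹) {K | ProperM K} {K | ProperM K} :=
    ⟨fun K hK => mul_inv_one_add_mul_mul_inv_one_sub (forward K hK).1, fun L hL => by
      simpa only [Matrix.neg_mul, ← sub_eq_add_neg, sub_neg_eq_add] using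
        mul_inv_one_add_mul_mul_inv_one_sub (backward L hL).1⟩
  simp only [Matrix.neg_mul, ← sub_eq_add_neg] at backward
  refine ⟨fun K hK => ⟨(forward K hK).1, (forward K hK).2, ?_, hInv.1 hK⟩,
    hInv.bijOn (fun K hK => (forward K hK).2) (fun L hL => (backward L hL).2), hInv⟩
  rw [one_sub_mul_mul_inv_one_add_mul (forward K hK).1]
  exact isUnit_nonsing_inv_det _ (forward K hK).1
end
end

section
/- (Theorem 3, main result.) Let (M, N, M̃, Ñ, X, Y, X̃, Ỹ) be a DCF of the strictly proper plant G ∈ F^{m×p} over Ω, and let the sparsity subspace S defined by K^bin be QI under G. (Sufficiency) If Q ∈ 𝔸^{p×m} is stable and satisfies wp(X̃_Q·M̃) ≤ K^bin or wp(M·X_Q) ≤ K^bin, then K_Q ∈ S and K_Q stabilizes G. (Necessity) If K ∈ S stabilizes G, then there exists a stable Q ∈ 𝔸^{p×m} with K = K_Q, wp(X̃_Q·M̃) ≤ K^bin, and wp(M·X_Q) ≤ K^bin. -/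
/-!
All closed-loop maps of the Youla controller `K_Q = Y_Q⁻¹ X_Q` are products of the
reparametrized coprime factors (`(I + G K_Q)⁻¹ = Ỹ_Q M̃`, `K_Q (I + G K_Q)⁻¹ = X̃_Q M̃ = M X_Q`,
…), so `K_Q` is stabilizing whenever `Q` is stable. Conversely every stabilizing `K` is `K_Q`
for `Q = (Y K - X)(M̃ + Ñ K)⁻¹`, which is a combination of the closed-loop maps of `K`. That
`Y_Q` is invertible at all is seen at `λ = ∞`, where `G` vanishes and `(Y_Q + X_Q G) M = I`
becomes `Y_Q M = I`. Sparsity enters through quadratic invariance: by Cayley–Hamilton and a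
polarization argument, `K ∈ S` if and only if `K (I + G K)⁻¹ ∈ S`, and the latter matrix is
`X̃_Q M̃ = M X_Q`.
-/

open Matrix

noncomputable section

section StableSubring

open Polynomial

variable {Ω : Set ℂ}

lemma StableF.of_denom_dvd {f g h : F} (hf : StableF Ω f) (hg : StableF Ω g)
    (hdeg : h.intDegree ≤ 0) (hdvd : h.denom ∣ f.denom * g.denom) : StableF Ω h := by
  refine ⟨hdeg, fun z hz => ?_⟩
  have hroot : ((f.denom * g.denom).map (algebraMap ℝ ℂ)).IsRoot z :=
    eval_eq_zero_of_dvd_of_eval_eq_zero (Polynomial.map_dvd _ hdvd) hz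
  rw [Polynomial.map_mul, IsRoot, eval_mul, mul_eq_zero] at hroot
  exact hroot.elim (hf.2 z) (hg.2 z)

lemma stableF_zero : StableF Ω 0 :=
  ⟨by simp, fun z hz => by simp at hz⟩

lemma stableF_one : StableF Ω 1 :=
  ⟨by simp, fun z hz => by simp at hz⟩

lemma StableF.add {f g : F} (hf : StableF Ω f) (hg : StableF Ω g) : StableF Ω (f + g) := by
  by_cases hg0 : g = 0
  · simpa [hg0] using hf
  by_cases hfg : f + g = 0
  · simpa [hfg] using stableF_zero
  exact hf.of_denom_dvd hg ((RatFunc.intDegree_add_le hg0 hfg).trans (max_le hf.1 hg.1))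
    (RatFunc.denom_add_dvd f g)

lemma StableF.mul {f g : F} (hf : StableF Ω f) (hg : StableF Ω g) : StableF Ω (f * g) := by
  by_cases hf0 : f = 0
  · simpa [hf0] using stableF_zero
  by_cases hg0 : g = 0
  · simpa [hg0] using stableF_zero
  exact hf.of_denom_dvd hg (by rw [RatFunc.intDegree_mul hf0 hg0]; exact add_nonpos hf.1 hg.1)
    (RatFunc.denom_mul_dvd f g)

lemma StableF.neg {f : F} (hf : StableF Ω f) : StableF Ω (-f) := by
  have hC : StableF Ω (RatFunc.C (-1)) :=
    ⟨(RatFunc.intDegree_C _).le, fun z hz => by rw [RatFunc.denom_C] at hz; simp at hz⟩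
  simpa using hC.mul hf

/-- The ring `𝔸`. -/
def stableSubring (Ω : Set ℂ) : Subring F where
  carrier := {f | StableF Ω f}
  zero_mem' := stableF_zero
  one_mem' := stableF_one
  add_mem' := StableF.add
  mul_mem' := StableF.mul
  neg_mem' := StableF.neg

lemma MatStable.add {a b : Type} {A B : Matrix a b F} (hA : MatStable Ω A)
    (hB : MatStable Ω B) : MatStable Ω (A + B) :=
  fun i j => (stableSubring Ω).add_mem (hA i j) (hB i j)

lemma MatStable.sub {a b : Type} {A B : Matrix a b F} (hA : MatStable Ω A)
    (hB : MatStable Ω B) : MatStable Ω (A - B) :=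
  fun i j => (stableSubring Ω).sub_mem (hA i j) (hB i j)

lemma MatStable.mul {a b c : Type} [Fintype b] {A : Matrix a b F} {B : Matrix b c F}
    (hA : MatStable Ω A) (hB : MatStable Ω B) : MatStable Ω (A * B) :=
  fun i j => (stableSubring Ω).sum_mem fun k _ => (stableSubring Ω).mul_mem (hA i k) (hB k j)

lemma matStable_one {a : Type} [DecidableEq a] : MatStable Ω (1 : Matrix a a F) := by
  intro i j
  rw [Matrix.one_apply]
  split_ifs
  exacts [stableF_one, stableF_zero]

end StableSubring

section Valuation

open IsLocalRing

lemma Matrix.isUnit_det_of_isUnit_det_add {R n : Type*} [CommRing R] [IsLocalRing R]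
    [Fintype n] [DecidableEq n] {A E : Matrix n n R} (hE : ∀ i j, E i j ∈ maximalIdeal R)
    (h : IsUnit (A + E).det) : IsUnit A.det := by
  have hEres : (residue R).mapMatrix E = 0 := by
    ext i j; exact (residue_eq_zero_iff _).mpr (hE i j)
  rw [← residue_ne_zero_iff_isUnit] at h ⊢
  rwa [RingHom.map_det, map_add, hEres, add_zero, ← RingHom.map_det] at h

variable {K Γ : Type*} [Field K] [LinearOrderedCommGroupWithZero Γ] (v : Valuation K Γ)

lemma Valuation.map_mul_apply_lt_one {a b c : Type*} [Fintype b] {A : Matrix a b K}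
    {B : Matrix b c K} (hA : ∀ i j, v (A i j) ≤ 1) (hB : ∀ i j, v (B i j) < 1)
    (i : a) (j : c) : v ((A * B) i j) < 1 :=
  v.map_sum_lt one_ne_zero fun k _ => by
    simpa using mul_lt_mul_of_le_of_lt_of_nonneg_of_pos (hA i k) (hB k j) zero_le one_pos

lemma Valuation.isUnit_det_of_add_mul_eq_one {n : Type*} [Fintype n] [DecidableEq n]
    {A E B : Matrix n n K} (hA : ∀ i j, v (A i j) ≤ 1) (hE : ∀ i j, v (E i j) < 1)
    (hB : ∀ i j, v (B i j) ≤ 1) (h : (A + E) * B = 1) : IsUnit A.det := by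
  let 𝒪 := v.valuationSubring
  let A' : Matrix n n 𝒪 := fun i j => ⟨A i j, hA i j⟩
  let E' : Matrix n n 𝒪 := fun i j => ⟨E i j, (hE i j).le⟩
  let B' : Matrix n n 𝒪 := fun i j => ⟨B i j, hB i j⟩
  have hinj : Function.Injective (RingHom.mapMatrix (m := n) 𝒪.subtype) :=
    Matrix.map_injective Subtype.val_injective
  have h' : (A' + E') * B' = 1 := hinj (by rw [map_one, map_mul, map_add]; exact h)
  have hA' : IsUnit A'.det := Matrix.isUnit_det_of_isUnit_det_add
    (fun i j => (Valuation.mem_maximalIdeal_iff K v).mpr (hE i j))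
    (Matrix.isUnit_det_of_right_inverse h')
  have hdet := hA'.map 𝒪.subtype
  rwa [RingHom.map_det] at hdet

lemma RatFunc.inftyValuation_le_one {K : Type*} [Field K] [DecidableEq (RatFunc K)]
    {f : RatFunc K} (hf : f.intDegree ≤ 0) : inftyValuation K f ≤ 1 := by
  rcases eq_or_ne f 0 with rfl | hf0
  · simp
  rw [inftyValuation_apply, inftyValuation_of_nonzero K hf0, ← WithZero.exp_zero,
    WithZero.exp_le_exp]
  exact hf

lemma RatFunc.inftyValuation_lt_one {K : Type*} [Field K] [DecidableEq (RatFunc K)]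
    {f : RatFunc K} (hf : f = 0 ∨ f.intDegree < 0) : inftyValuation K f < 1 := by
  rcases eq_or_ne f 0 with rfl | hf0
  · simp
  rw [inftyValuation_apply, inftyValuation_of_nonzero K hf0, ← WithZero.exp_zero,
    WithZero.exp_lt_exp]
  exact hf.resolve_left hf0

end Valuation

section MatrixInverse

open Polynomial

lemma Matrix.exists_inv_eq_aeval {K n : Type*} [Field K] [Fintype n] [DecidableEq n]
    (A : Matrix n n K) : ∃ q : K[X], A⁻¹ = aeval A q := by
  by_cases hA : IsUnit A.det
  swap
  · exact ⟨0, by rw [Matrix.nonsing_inv_apply_not_isUnit A hA, map_zero]⟩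
  set c := A.charpoly.coeff 0
  have hc : c ≠ 0 := fun hc0 => by simp [Matrix.det_eq_sign_charpoly_coeff, c, hc0] at hA
  -- Cayley–Hamilton: `A * divX(χ_A)(A) = -c`.
  have hCH : A * aeval A A.charpoly.divX = -(c • 1) := by
    have h := congrArg (aeval A) (X_mul_divX_add A.charpoly)
    rw [Matrix.aeval_self_charpoly, map_add, map_mul, aeval_X, aeval_C,
      Algebra.algebraMap_eq_smul_one] at h
    exact eq_neg_of_add_eq_zero_left h
  refine ⟨C (-c⁻¹) * A.charpoly.divX, Matrix.inv_eq_right_inv ?_⟩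
  rw [map_mul, aeval_C, Algebra.algebraMap_eq_smul_one, Matrix.smul_mul, Matrix.one_mul,
    Matrix.mul_smul, hCH, smul_neg, smul_smul, neg_mul, inv_mul_cancel₀ hc, neg_smul, neg_neg,
    one_smul]

lemma Matrix.mul_inv_one_add_mul_mul {R ι κ : Type*} [CommRing R] [Fintype ι] [Fintype κ]
    [DecidableEq ι] [DecidableEq κ] {A : Matrix ι κ R} {B : Matrix κ ι R}
    (hu : IsUnit (1 + B * A).det) : A * (1 + B * A)⁻¹ * B = 1 - (1 + A * B)⁻¹ := by
  have hu' : IsUnit (1 + A * B).det := by rwa [det_one_add_mul_comm]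
  have hcomm : A * (1 + B * A) = (1 + A * B) * A := by
    simp only [Matrix.mul_add, Matrix.add_mul, Matrix.mul_one, Matrix.one_mul, Matrix.mul_assoc]
  have hpush : A * (1 + B * A)⁻¹ = (1 + A * B)⁻¹ * A :=
    calc A * (1 + B * A)⁻¹ = (1 + A * B)⁻¹ * ((1 + A * B) * A) * (1 + B * A)⁻¹ := by
          rw [nonsing_inv_mul_cancel_left _ _ hu']
      _ = (1 + A * B)⁻¹ * A := by
          rw [← hcomm, ← Matrix.mul_assoc, mul_nonsing_inv_cancel_right _ _ hu]
  calc A * (1 + B * A)⁻¹ * B = (1 + A * B)⁻¹ * ((1 + A * B) - 1) := by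
        rw [hpush, Matrix.mul_assoc, add_sub_cancel_left]
    _ = 1 - (1 + A * B)⁻¹ := by rw [Matrix.mul_sub, nonsing_inv_mul _ hu', Matrix.mul_one]

end MatrixInverse

section QuadraticInvariance

open Polynomial

variable {K ι κ : Type*} [Field K] [Fintype ι] [Fintype κ] [DecidableEq κ]

def IsQuadInvariant (S : Submodule K (Matrix ι κ K)) (G : Matrix κ ι K) : Prop :=
  ∀ T ∈ S, T * G * T ∈ S

variable {S : Submodule K (Matrix ι κ K)} {G : Matrix κ ι K} {T : Matrix ι κ K}

lemma IsQuadInvariant.mul_pow_mem [NeZero (2 : K)] (hS : IsQuadInvariant S G) (hT : T ∈ S)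
    (k : ℕ) : T * (G * T) ^ k ∈ S := by
  induction k with
  | zero => simpa using hT
  | succ k ih =>
    set J := T * (G * T) ^ k
    have hTGJ : T * G * J = T * (G * T) ^ (k + 1) := by
      simp only [J, pow_succ', ← Matrix.mul_assoc]
    have hJGT : J * G * T = T * (G * T) ^ (k + 1) := by
      simp only [J, pow_succ, ← Matrix.mul_assoc]
    have hpol : (2 : K) • (T * (G * T) ^ (k + 1)) =
        (T + J) * G * (T + J) - T * G * T - J * G * J :=
      calc (2 : K) • (T * (G * T) ^ (k + 1)) = T * G * J + J * G * T := by
            rw [two_smul, hTGJ, hJGT]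
        _ = (T + J) * G * (T + J) - T * G * T - J * G * J := by
            simp only [Matrix.add_mul, Matrix.mul_add]
            abel
    rw [← S.smul_mem_iff (two_ne_zero : (2 : K) ≠ 0), hpol]
    exact S.sub_mem (S.sub_mem (hS _ (S.add_mem hT ih)) (hS T hT)) (hS J ih)

lemma IsQuadInvariant.mul_aeval_mem [NeZero (2 : K)] (hS : IsQuadInvariant S G) (hT : T ∈ S)
    (q : K[X]) : T * aeval (G * T) q ∈ S := by
  rw [aeval_eq_sum_range, Matrix.mul_sum]
  exact S.sum_mem fun k _ => by
    rw [Matrix.mul_smul]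
    exact S.smul_mem _ (hS.mul_pow_mem hT k)

lemma IsQuadInvariant.mul_inv_mem [NeZero (2 : K)] (hS : IsQuadInvariant S G) (hT : T ∈ S) :
    T * (1 + G * T)⁻¹ ∈ S := by
  obtain ⟨q, hq⟩ := Matrix.exists_inv_eq_aeval (1 + G * T)
  have hcomp : aeval (1 + G * T) q = aeval (G * T) (q.comp (X + 1)) := by
    rw [aeval_comp, map_add, aeval_X, map_one, add_comm]
  rw [hq, hcomp]
  exact hS.mul_aeval_mem hT _

/-- The map `T ↦ T (1 + G T)⁻¹` is inverted by `U ↦ -((-U) (1 + G (-U))⁻¹)`. -/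
lemma IsQuadInvariant.mem_of_mul_inv_mem [NeZero (2 : K)] (hS : IsQuadInvariant S G)
    (hu : IsUnit (1 + G * T).det) (h : T * (1 + G * T)⁻¹ ∈ S) : T ∈ S := by
  set U := T * (1 + G * T)⁻¹
  have hUT : U * (1 + G * T) = T := Matrix.nonsing_inv_mul_cancel_right _ T hu
  have hinv : (1 + G * -U) * (1 + G * T) = 1 := by
    rw [Matrix.add_mul, Matrix.one_mul, Matrix.mul_neg, Matrix.neg_mul, Matrix.mul_assoc, hUT]
    abel
  have hmem := hS.mul_inv_mem (S.neg_mem h)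
  rwa [Matrix.inv_eq_right_inv hinv, Matrix.neg_mul, hUT, S.neg_mem_iff] at hmem

/-- The subspace `S = {K | wp(K) ≤ P}`. -/
def sparsitySubspace {K ι κ : Type*} [Field K] (P : ι → κ → Bool) :
    Submodule K (Matrix ι κ K) where
  carrier := {T | ∀ i j, P i j = false → T i j = 0}
  add_mem' hA hB i j hij := by simp [hA i j hij, hB i j hij]
  zero_mem' _ _ _ := rfl
  smul_mem' c T hT i j hij := by simp [hT i j hij]

end QuadraticInvariance

section DoublyCoprime

/-- The Youla parameter `Q = (Y K - X) (M̃ + Ñ K)⁻¹` of a controller `K`, written so that it is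
visibly a combination of the closed-loop maps of `K`. -/
def youlaParam {m p : ℕ} (G : Matrix (Fin m) (Fin p) F) (K X Xt : Matrix (Fin p) (Fin m) F)
    (Y : Matrix (Fin p) (Fin p) F) (Yt : Matrix (Fin m) (Fin m) F) : Matrix (Fin p) (Fin m) F :=
  (Y * K - X) * ((1 + G * K)⁻¹ * (Yt + G * Xt))

variable {Ω : Set ℂ} {m p : ℕ} {G : Matrix (Fin m) (Fin p) F}
  {M : Matrix (Fin p) (Fin p) F} {N : Matrix (Fin m) (Fin p) F}
  {Mt : Matrix (Fin m) (Fin m) F} {Nt : Matrix (Fin m) (Fin p) F}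
  {X : Matrix (Fin p) (Fin m) F} {Y : Matrix (Fin p) (Fin p) F}
  {Xt : Matrix (Fin p) (Fin m) F} {Yt : Matrix (Fin m) (Fin m) F}

namespace IsDCF

lemma N_eq (hD : IsDCF Ω G M N Mt Nt X Y Xt Yt) : N = G * M := by
  rw [hD.hRight, nonsing_inv_mul_cancel_right _ _ hD.hM]

lemma Nt_eq (hD : IsDCF Ω G M N Mt Nt X Y Xt Yt) : Nt = Mt * G := by
  rw [hD.hLeft, mul_nonsing_inv_cancel_left _ _ hD.hMt]

/-- The new factors are `[[1, Q], [0, 1]]` times the old left factor and the old right factor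
times `[[1, -Q], [0, 1]]`. -/
lemma bezout_param (hD : IsDCF Ω G M N Mt Nt X Y Xt Yt) (Q : Matrix (Fin p) (Fin m) F) :
    fromBlocks (Y - Q * Nt) (X + Q * Mt) (-Nt) Mt *
      fromBlocks M (-(Xt + M * Q)) N (Yt - N * Q) = 1 := by
  have hL : fromBlocks (Y - Q * Nt) (X + Q * Mt) (-Nt) Mt =
      fromBlocks 1 Q 0 1 * fromBlocks Y X (-Nt) Mt := by
    rw [fromBlocks_multiply]
    congr 1 <;> simp [sub_eq_add_neg]
  have hR : fromBlocks M (-(Xt + M * Q)) N (Yt - N * Q) =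
      fromBlocks M (-Xt) N Yt * fromBlocks 1 (-Q) 0 1 := by
    rw [fromBlocks_multiply]
    congr 1 <;> simp [sub_eq_add_neg, add_comm]
  rw [hL, hR, Matrix.mul_assoc, ← Matrix.mul_assoc (fromBlocks Y X (-Nt) Mt), hD.bezout,
    Matrix.one_mul, fromBlocks_multiply, ← fromBlocks_one]
  simp

lemma right_bezout (hD : IsDCF Ω G M N Mt Nt X Y Xt Yt) (Q : Matrix (Fin p) (Fin m) F) :
    (Y - Q * Nt + (X + Q * Mt) * G) * M = 1 := by
  have h := hD.bezout_param Q
  rw [fromBlocks_multiply, ← fromBlocks_one, fromBlocks_inj] at h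
  rw [Matrix.add_mul, Matrix.mul_assoc, ← hD.N_eq]
  exact h.1

lemma XQ_mul_YtQ (hD : IsDCF Ω G M N Mt Nt X Y Xt Yt) (Q : Matrix (Fin p) (Fin m) F) :
    (X + Q * Mt) * (Yt - N * Q) = (Y - Q * Nt) * (Xt + M * Q) := by
  have h := hD.bezout_param Q
  rw [fromBlocks_multiply, ← fromBlocks_one, fromBlocks_inj] at h
  have h12 := h.2.1
  rwa [Matrix.mul_neg, neg_add_eq_sub, sub_eq_zero] at h12

lemma left_bezout (hD : IsDCF Ω G M N Mt Nt X Y Xt Yt) (Q : Matrix (Fin p) (Fin m) F) :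
    Mt * (Yt - N * Q + G * (Xt + M * Q)) = 1 := by
  have h := hD.bezout_param Q
  rw [fromBlocks_multiply, ← fromBlocks_one, fromBlocks_inj] at h
  have h22 := h.2.2.2
  rw [Matrix.neg_mul, Matrix.mul_neg, neg_neg] at h22
  rwa [Matrix.mul_add, ← Matrix.mul_assoc, ← hD.Nt_eq, add_comm]

lemma M_mul_YQ_add (hD : IsDCF Ω G M N Mt Nt X Y Xt Yt) (Q : Matrix (Fin p) (Fin m) F) :
    M * (Y - Q * Nt) + (Xt + M * Q) * Nt = 1 := by
  have h := mul_eq_one_comm.mp (hD.bezout_param Q)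
  rw [fromBlocks_multiply, ← fromBlocks_one, fromBlocks_inj] at h
  have h11 := h.1
  rwa [Matrix.neg_mul, Matrix.mul_neg, neg_neg] at h11

lemma M_mul_XQ (hD : IsDCF Ω G M N Mt Nt X Y Xt Yt) (Q : Matrix (Fin p) (Fin m) F) :
    M * (X + Q * Mt) = (Xt + M * Q) * Mt := by
  have h := mul_eq_one_comm.mp (hD.bezout_param Q)
  rw [fromBlocks_multiply, ← fromBlocks_one, fromBlocks_inj] at h
  have h12 := h.2.1
  rwa [Matrix.neg_mul, ← sub_eq_add_neg, sub_eq_zero] at h12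

lemma XtQ_mul_Mt_eq (hD : IsDCF Ω G M N Mt Nt X Y Xt Yt) {Q K : Matrix (Fin p) (Fin m) F}
    (hK : (Y - Q * Nt) * K = X + Q * Mt) (hu : IsUnit (1 + G * K).det) :
    (Xt + M * Q) * Mt = K * (1 + G * K)⁻¹ := by
  have h : (Xt + M * Q) * Mt * (1 + G * K) = K :=
    calc (Xt + M * Q) * Mt * (1 + G * K) = M * ((Y - Q * Nt) * K) + (Xt + M * Q) * Nt * K := by
          rw [hK, hD.M_mul_XQ, hD.Nt_eq, Matrix.mul_add, Matrix.mul_one]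
          simp only [Matrix.mul_assoc]
      _ = (M * (Y - Q * Nt) + (Xt + M * Q) * Nt) * K := by
          rw [Matrix.add_mul (M * _), Matrix.mul_assoc M]
      _ = K := by rw [hD.M_mul_YQ_add, Matrix.one_mul]
  rw [← mul_nonsing_inv_cancel_right _ ((Xt + M * Q) * Mt) hu, h]

lemma one_add_mul_controller_mul (hD : IsDCF Ω G M N Mt Nt X Y Xt Yt)
    {Q : Matrix (Fin p) (Fin m) F} (hY : IsUnit (Y - Q * Nt).det) :
    (1 + G * ((Y - Q * Nt)⁻¹ * (X + Q * Mt))) * ((Yt - N * Q) * Mt) = 1 := by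
  have hKYt : (Y - Q * Nt)⁻¹ * (X + Q * Mt) * (Yt - N * Q) = Xt + M * Q := by
    rw [Matrix.mul_assoc, hD.XQ_mul_YtQ, nonsing_inv_mul_cancel_left _ _ hY]
  rw [← Matrix.mul_assoc, Matrix.add_mul, Matrix.one_mul, Matrix.mul_assoc G, hKYt]
  exact mul_eq_one_comm.mp (hD.left_bezout Q)

lemma one_add_controller_mul_mul (hD : IsDCF Ω G M N Mt Nt X Y Xt Yt)
    {Q : Matrix (Fin p) (Fin m) F} (hY : IsUnit (Y - Q * Nt).det) :
    (1 + (Y - Q * Nt)⁻¹ * (X + Q * Mt) * G) * (M * (Y - Q * Nt)) = 1 := by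
  have h : (Y - Q * Nt) * ((1 + (Y - Q * Nt)⁻¹ * (X + Q * Mt) * G) * M) = 1 := by
    rw [← Matrix.mul_assoc, Matrix.mul_add, Matrix.mul_one, Matrix.mul_assoc _ _ G,
      ← Matrix.mul_assoc (Y - Q * Nt), mul_nonsing_inv _ hY, Matrix.one_mul]
    exact hD.right_bezout Q
  rw [← Matrix.mul_assoc]
  exact mul_eq_one_comm.mp h

lemma stabilizes_controller (hD : IsDCF Ω G M N Mt Nt X Y Xt Yt)
    {Q : Matrix (Fin p) (Fin m) F} (hQ : MatStable Ω Q) (hY : IsUnit (Y - Q * Nt).det) :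
    Stabilizes Ω G ((Y - Q * Nt)⁻¹ * (X + Q * Mt)) := by
  have h1 := hD.one_add_mul_controller_mul hY
  have hu := isUnit_det_of_right_inverse h1
  have hYtQ : MatStable Ω (Yt - N * Q) := hD.stYt.sub (hD.stN.mul hQ)
  refine ⟨hu, ?_, ?_, ?_, ?_⟩
  · rw [inv_eq_right_inv h1]
    exact hYtQ.mul hD.stMt
  · rw [inv_eq_right_inv h1, Matrix.mul_assoc, ← hD.Nt_eq]
    exact hYtQ.mul hD.stNt
  · rw [← hD.XtQ_mul_Mt_eq (mul_nonsing_inv_cancel_left _ _ hY) hu]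
    exact (hD.stXt.add (hD.stM.mul hQ)).mul hD.stMt
  · rw [inv_eq_right_inv (hD.one_add_controller_mul_mul hY)]
    exact hD.stM.mul (hD.stY.sub (hQ.mul hD.stNt))

/-- At `λ = ∞` the identity `(Y_Q + X_Q G) M = 1` reduces to `Y_Q M = 1`, because `G` is
strictly proper. -/
lemma isUnit_det_YQ (hD : IsDCF Ω G M N Mt Nt X Y Xt Yt) (hG : StrictlyProper G)
    {Q : Matrix (Fin p) (Fin m) F} (hQ : MatStable Ω Q) : IsUnit (Y - Q * Nt).det := by
  classical
  have hproper {a b : Type} {A : Matrix a b F} (hA : MatStable Ω A) (i : a) (j : b) :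
      RatFunc.inftyValuation ℝ (A i j) ≤ 1 :=
    RatFunc.inftyValuation_le_one (hA i j).1
  exact (RatFunc.inftyValuation ℝ).isUnit_det_of_add_mul_eq_one
    (hproper (hD.stY.sub (hQ.mul hD.stNt)))
    ((RatFunc.inftyValuation ℝ).map_mul_apply_lt_one (hproper (hD.stX.add (hQ.mul hD.stMt)))
      fun i j => RatFunc.inftyValuation_lt_one (hG i j))
    (hproper hD.stM) (hD.right_bezout Q)

lemma YQ_mul_eq_XQ (hD : IsDCF Ω G M N Mt Nt X Y Xt Yt) {K : Matrix (Fin p) (Fin m) F}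
    (hu : IsUnit (1 + G * K).det) :
    (Y - youlaParam G K X Xt Y Yt * Nt) * K = X + youlaParam G K X Xt Y Yt * Mt := by
  set Q := youlaParam G K X Xt Y Yt with hQdef
  have hC : (1 + G * K)⁻¹ * (Yt + G * Xt) * (Mt + Nt * K) = 1 := by
    have hbez : (Yt + G * Xt) * Mt = 1 := mul_eq_one_comm.mp (by simpa using hD.left_bezout 0)
    have hfac : Mt + Nt * K = Mt * (1 + G * K) := by
      rw [hD.Nt_eq, Matrix.mul_add, Matrix.mul_one, Matrix.mul_assoc]
    rw [hfac, ← Matrix.mul_assoc, Matrix.mul_assoc _ _ Mt, hbez, Matrix.mul_one,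
      nonsing_inv_mul _ hu]
  have hQ : Q * (Mt + Nt * K) = Y * K - X := by
    rw [hQdef, youlaParam, Matrix.mul_assoc, hC, Matrix.mul_one]
  calc (Y - Q * Nt) * K = X + (Y * K - X) - Q * (Nt * K) := by
        rw [Matrix.sub_mul, Matrix.mul_assoc]; abel
    _ = X + Q * Mt := by rw [← hQ, Matrix.mul_add]; abel

lemma matStable_youlaParam (hD : IsDCF Ω G M N Mt Nt X Y Xt Yt)
    {K : Matrix (Fin p) (Fin m) F} (hK : Stabilizes Ω G K) :
    MatStable Ω (youlaParam G K X Xt Y Yt) := by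
  obtain ⟨hu, hS, hSG, hKS, hT⟩ := hK
  have hC : MatStable Ω ((1 + G * K)⁻¹ * (Yt + G * Xt)) := by
    rw [Matrix.mul_add, ← Matrix.mul_assoc]
    exact (hS.mul hD.stYt).add (hSG.mul hD.stXt)
  have hKC : MatStable Ω (K * ((1 + G * K)⁻¹ * (Yt + G * Xt))) := by
    have hsplit : K * ((1 + G * K)⁻¹ * (Yt + G * Xt)) =
        K * (1 + G * K)⁻¹ * Yt + (1 - (1 + K * G)⁻¹) * Xt := by
      rw [← mul_inv_one_add_mul_mul hu, Matrix.mul_add, Matrix.mul_add]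
      simp only [Matrix.mul_assoc]
    rw [hsplit]
    exact (hKS.mul hD.stYt).add ((matStable_one.sub hT).mul hD.stXt)
  rw [youlaParam, Matrix.sub_mul, Matrix.mul_assoc]
  exact (hD.stY.mul hKC).sub (hD.stX.mul hC)

end IsDCF

end DoublyCoprime

/-- **Theorem 3 (main result).** Let a DCF of the strictly proper plant `G` be given and let the
sparsity subspace `S` given by `Kbin` be QI under `G`. If `Q` is stable and
`wp(X̃_Q·M̃) ≤ K^bin` or `wp(M·X_Q) ≤ K^bin`, then `K_Q ∈ S` and `K_Q` stabilizes `G`;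
conversely, every stabilizing controller in `S` equals `K_Q` for some stable `Q` satisfying
both sparsity inequalities. -/
theorem main_sparse_stabilization (Ω : Set ℂ) (m p : ℕ)
    (G : Matrix (Fin m) (Fin p) F) (hG : StrictlyProper G)
    (M : Matrix (Fin p) (Fin p) F) (N : Matrix (Fin m) (Fin p) F)
    (Mt : Matrix (Fin m) (Fin m) F) (Nt : Matrix (Fin m) (Fin p) F)
    (X : Matrix (Fin p) (Fin m) F) (Y : Matrix (Fin p) (Fin p) F)
    (Xt : Matrix (Fin p) (Fin m) F) (Yt : Matrix (Fin m) (Fin m) F)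
    (hDCF : IsDCF Ω G M N Mt Nt X Y Xt Yt)
    (Kbin : Fin p → Fin m → Bool)
    (hQI : ∀ K : Matrix (Fin p) (Fin m) F,
      (∀ i j, Kbin i j = false → K i j = 0) →
      (∀ i j, Kbin i j = false → (K * G * K) i j = 0)) :
    (∀ Q : Matrix (Fin p) (Fin m) F, MatStable Ω Q →
      ((∀ i j, Kbin i j = false → ((Xt + M * Q) * Mt) i j = 0) ∨
       (∀ i j, Kbin i j = false → (M * (X + Q * Mt)) i j = 0)) →
      (∀ i j, Kbin i j = false → ((Y - Q * Nt)⁻¹ * (X + Q * Mt)) i j = 0) ∧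
      Stabilizes Ω G ((Y - Q * Nt)⁻¹ * (X + Q * Mt))) ∧
    (∀ K : Matrix (Fin p) (Fin m) F,
      (∀ i j, Kbin i j = false → K i j = 0) → Stabilizes Ω G K →
      ∃ Q : Matrix (Fin p) (Fin m) F, MatStable Ω Q ∧
        K = (Y - Q * Nt)⁻¹ * (X + Q * Mt) ∧
        (∀ i j, Kbin i j = false → ((Xt + M * Q) * Mt) i j = 0) ∧
        (∀ i j, Kbin i j = false → (M * (X + Q * Mt)) i j = 0)) := by
  have hS : IsQuadInvariant (sparsitySubspace Kbin) G := hQI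
  constructor
  · intro Q hQ hsp
    have hY := hDCF.isUnit_det_YQ hG hQ
    have hstab := hDCF.stabilizes_controller hQ hY
    have hT := hDCF.XtQ_mul_Mt_eq (mul_nonsing_inv_cancel_left _ _ hY) hstab.1
    refine ⟨hS.mem_of_mul_inv_mem hstab.1 ?_, hstab⟩
    rw [← hT]
    exact hsp.elim id fun h => hDCF.M_mul_XQ Q ▸ h
  · intro K hK hstab
    have hQ := hDCF.matStable_youlaParam hstab
    have hY := hDCF.isUnit_det_YQ hG hQ
    have hKQ := hDCF.YQ_mul_eq_XQ hstab.1
    have hT := hDCF.XtQ_mul_Mt_eq hKQ hstab.1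
    have hTS : K * (1 + G * K)⁻¹ ∈ sparsitySubspace Kbin := hS.mul_inv_mem hK
    refine ⟨_, hQ, ?_, hT ▸ hTS, hDCF.M_mul_XQ _ ▸ hT ▸ hTS⟩
    rw [← hKQ, nonsing_inv_mul_cancel_left _ _ hY]
end
end
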